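/- The Fano polygons conv{(1,0),(0,1),(−1,−1),(0,−1)} (corresponding to the del Pezzo surface 𝔽₁) and conv{(1,0),(0,1),(−1,0),(0,−1)} (corresponding to ℙ¹ × ℙ¹) are not mutation-equivalent. -/

import Mathlib

open scoped Pointwise

namespace FanoPaper

abbrev NZ : Type := ℤ × ℤ
abbrev NQ : Type := ℚ × ℚ

/-- Embedding of the lattice `N = ℤ²` into `N ⊗ ℚ = ℚ²`. -/
def ι (v : NZ) : NQ := ((v.1 : ℚ), (v.2 : ℚ))

/-- Pairing between `M = Hom(N, ℤ)` (identified with `ℤ²`) and `N`. -/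
def dotZ (w v : NZ) : ℤ := w.1 * v.1 + w.2 * v.2

/-- Pairing between `M` and `N ⊗ ℚ`. -/
def dotQ (w : NZ) (x : NQ) : ℚ := (w.1 : ℚ) * x.1 + (w.2 : ℚ) * x.2

/-- The determinant `u ∧ u' = u₁u'₂ − u₂u'₁`. -/
def wedge (u v : NZ) : ℤ := u.1 * v.2 - u.2 * v.1

/-- A lattice vector is primitive if its coordinates are coprime. -/
def Primitive (v : NZ) : Prop := IsCoprime v.1 v.2

/-- A Fano polygon: the convex hull of a finite set of primitive lattice vertices,
containing the origin in its strict interior; `verts` is exactly the vertex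
(extreme point) set. -/
structure FanoPolygon where
  verts : Finset NZ
  verts_nonempty : verts.Nonempty
  verts_primitive : ∀ v ∈ verts, Primitive v
  zero_mem_interior : (0 : NQ) ∈ interior (convexHull ℚ (ι '' (verts : Set NZ)))
  verts_extreme : ∀ v ∈ verts, ι v ∉ convexHull ℚ (ι '' ((verts.erase v : Finset NZ) : Set NZ))

namespace FanoPolygon

/-- The polygon itself, as a subset of `ℚ²`. -/
def hull (P : FanoPolygon) : Set NQ := convexHull ℚ (ι '' (P.verts : Set NZ))

/-- `h_min := min w(P)`. -/
def hMin (P : FanoPolygon) (w : NZ) : ℤ := P.verts.inf' P.verts_nonempty (dotZ w)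

/-- `h_max := max w(P)`. -/
def hMax (P : FanoPolygon) (w : NZ) : ℤ := P.verts.sup' P.verts_nonempty (dotZ w)

/-- `w` is the primitive inner normal vector of an edge of `P`:
`w` is primitive and attains its minimum on `P` at (at least) two vertices. -/
def IsEdgeNormal (P : FanoPolygon) (w : NZ) : Prop :=
  Primitive w ∧ 2 ≤ (P.verts.filter (fun v => dotZ w v = P.hMin w)).card

/-- The edge of `P` with inner normal `w`, i.e. the face on which `w` is minimal. -/
def edge (P : FanoPolygon) (w : NZ) : Set NQ :=
  {x | x ∈ P.hull ∧ dotQ w x = (P.hMin w : ℚ)}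

/-- The height (local index) `r_E` of the edge with inner normal `w`. -/
def height (P : FanoPolygon) (w : NZ) : ℤ := -(P.hMin w)

/-- The width `k_E = |E ∩ N| − 1` of the edge with inner normal `w`. -/
noncomputable def width (P : FanoPolygon) (w : NZ) : ℕ :=
  {v : NZ | ι v ∈ P.edge w}.ncard - 1

/-- `w_h(P) := conv{x ∈ P ∩ N : w(x) = h}`. -/
def slice (P : FanoPolygon) (w : NZ) (h : ℤ) : Set NQ :=
  convexHull ℚ (ι '' {v : NZ | ι v ∈ P.hull ∧ dotZ w v = h})

end FanoPolygon

/-- The factor `F = conv{0, v}`. -/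
def factor (v : NZ) : Set NQ := convexHull ℚ {(0 : NQ), ι v}

/-- A (possibly empty) lattice polytope in `ℚ²`. -/
def IsLatticePolytope (S : Set NQ) : Prop :=
  ∃ T : Finset NZ, S = convexHull ℚ (ι '' (T : Set NZ))

/-- The data `{G_h}` required to mutate `P` with respect to `w` with factor `conv{0, v}`:
for each `h_min ≤ h ≤ −1`, `G_h` is a lattice polytope with
`{vertices of P at height h} ⊆ G_h + |h|·F ⊆ w_h(P)`. -/
def MutationData (P : FanoPolygon) (w v : NZ) (G : ℤ → Set NQ) : Prop :=
  ∀ h : ℤ, P.hMin w ≤ h → h ≤ -1 →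
    IsLatticePolytope (G h) ∧
    ι '' {x : NZ | x ∈ P.verts ∧ dotZ w x = h} ⊆ G h + ((|h| : ℚ) • factor v) ∧
    G h + ((|h| : ℚ) • factor v) ⊆ P.slice w h

/-- The mutated set `mut_w(P, F)`. -/
def mutSet (P : FanoPolygon) (w v : NZ) (G : ℤ → Set NQ) : Set NQ :=
  convexHull ℚ ((⋃ h ∈ Finset.Icc (P.hMin w) (-1 : ℤ), G h) ∪
    ⋃ h ∈ Finset.Icc (0 : ℤ) (P.hMax w), (P.slice w h + ((h : ℚ) • factor v)))

/-- `Q` is the mutation of `P` with respect to `w` with factor `conv{0, v}`. -/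
def IsMutationWith (P : FanoPolygon) (w v : NZ) (Q : FanoPolygon) : Prop :=
  ∃ G : ℤ → Set NQ, MutationData P w v G ∧ Q.hull = mutSet P w v G

/-- `Q` is a mutation of `P`. -/
def IsMutation (P Q : FanoPolygon) : Prop :=
  ∃ w v : NZ, P.IsEdgeNormal w ∧ Primitive v ∧ dotZ w v = 0 ∧ IsMutationWith P w v Q

/-- `GL₂(ℤ)`-equivalence of Fano polygons. -/
def GLEquiv (P Q : FanoPolygon) : Prop :=
  ∃ f : NZ ≃ₗ[ℤ] NZ, Q.verts = P.verts.image f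

/-- Mutation-equivalence: the equivalence relation generated by mutations and
`GL₂(ℤ)`-transformations. -/
def MutEquiv (P Q : FanoPolygon) : Prop :=
  Relation.EqvGen (fun A B => IsMutation A B ∨ GLEquiv A B) P Q

/-- There exists a mutation of `P` with respect to `w`: a factor and lattice polytopes
`{G_h}` satisfying the defining inclusions. -/
def AdmitsMutation (P : FanoPolygon) (w : NZ) : Prop :=
  ∃ v : NZ, Primitive v ∧ dotZ w v = 0 ∧ ∃ G : ℤ → Set NQ, MutationData P w v G

namespace FanoPolygon

/-- The number of lattice points on the boundary of `P`. -/
noncomputable def boundaryPts (P : FanoPolygon) : ℕ :=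
  {v : NZ | ι v ∈ frontier P.hull}.ncard

/-- The number of lattice points in the strict interior of `P`. -/
noncomputable def interiorPts (P : FanoPolygon) : ℕ :=
  {v : NZ | ι v ∈ interior P.hull}.ncard

/-- `P` is minimal if every mutation has at least as many boundary lattice points. -/
def Minimal (P : FanoPolygon) : Prop :=
  ∀ Q : FanoPolygon, IsMutation P Q → P.boundaryPts ≤ Q.boundaryPts

/-- Empty residual basket: `r_E ∣ k_E` for every edge `E` of `P`. -/
def EmptyBasket (P : FanoPolygon) : Prop :=
  ∀ w : NZ, P.IsEdgeNormal w → P.height w ∣ (P.width w : ℤ)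

/-- The number `n` of primitive T-cones of `P`: `n = Σ_E ⌊k_E / r_E⌋`. -/
noncomputable def tConeCount (P : FanoPolygon) : ℕ :=
  ∑ᶠ w ∈ {w : NZ | P.IsEdgeNormal w}, P.width w / (P.height w).toNat

/-- All residual singularities of `P` are of type `1/3(1,1)`: every edge `E`
satisfies `r_E ∣ k_E` or (`r_E = 3` and `k_E ≡ 1 mod 3`). -/
def ThirdBasket (P : FanoPolygon) : Prop :=
  ∀ w : NZ, P.IsEdgeNormal w →
    P.height w ∣ (P.width w : ℤ) ∨ (P.height w = 3 ∧ P.width w % 3 = 1)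

/-- The number `m` of residual singularities `1/3(1,1)`:
the number of edges `E` with `r_E = 3` and `3 ∤ k_E`. -/
noncomputable def thirdCount (P : FanoPolygon) : ℕ :=
  {w : NZ | P.IsEdgeNormal w ∧ P.height w = 3 ∧ ¬ (3 ∣ P.width w)}.ncard

/-- The number of residual lattice points of `P`:
`Σ_E ( q_E(r_E − 1)/2 + max(q_E − 1, 0) )` with `q_E = k_E mod r_E`. -/
noncomputable def residualCount (P : FanoPolygon) : ℚ :=
  ∑ᶠ w ∈ {w : NZ | P.IsEdgeNormal w},
    (((((P.width w : ℤ) % P.height w) : ℤ) : ℚ) * ((P.height w : ℚ) - 1) / 2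
      + max (((((P.width w : ℤ) % P.height w) : ℤ) : ℚ) - 1) 0)

end FanoPolygon

/-- Embedding of the lattice into `ℝ²`, used to measure volumes. -/
def ιR (v : NZ) : ℝ × ℝ := ((v.1 : ℝ), (v.2 : ℝ))

namespace FanoPolygon

/-- The polygon, realised in `ℝ²`. -/
def hullR (P : FanoPolygon) : Set (ℝ × ℝ) := convexHull ℝ (ιR '' (P.verts : Set NZ))

/-- Normalised volume (twice the Euclidean area) of `P`. -/
noncomputable def nvol (P : FanoPolygon) : ℝ := 2 * (MeasureTheory.volume P.hullR).toReal

/-- The dual polygon `P* = {u : u(x) ≥ −1 ∀ x ∈ P}`, realised in `ℝ²`. -/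
def dualR (P : FanoPolygon) : Set (ℝ × ℝ) :=
  {u : ℝ × ℝ | ∀ x ∈ P.hullR, -1 ≤ u.1 * x.1 + u.2 * x.2}

/-- Normalised volume of the dual polygon `P*`. -/
noncomputable def nvolDual (P : FanoPolygon) : ℝ := 2 * (MeasureTheory.volume P.dualR).toReal

/-- The sublattice `Λ_P ⊆ M` generated by the primitive inner normal vectors of the
edges of `P`. -/
def normalLattice (P : FanoPolygon) : Submodule ℤ NZ :=
  Submodule.span ℤ {w : NZ | P.IsEdgeNormal w}

/-- The index `[M : Λ_P]`. -/
noncomputable def latticeIndex (P : FanoPolygon) : ℕ :=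
  P.normalLattice.toAddSubgroup.index

/-- A T-edge normal: an edge normal whose edge satisfies `k_E ≥ r_E`. -/
def IsTEdgeNormal (P : FanoPolygon) (w : NZ) : Prop :=
  P.IsEdgeNormal w ∧ P.height w ≤ (P.width w : ℤ)

/-- `ws` enumerates the primitive T-cone normals of `P` with multiplicities:
each T-edge normal `w` occurs exactly `⌊k_E/r_E⌋` times, and nothing else occurs. -/
def IsTConeEnum (P : FanoPolygon) {n : ℕ} (ws : Fin n → NZ) : Prop :=
  ∀ w : NZ,
    (P.IsTEdgeNormal w →
      (Finset.univ.filter (fun i : Fin n => ws i = w)).card = P.width w / (P.height w).toNat) ∧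
    (¬ P.IsTEdgeNormal w → (Finset.univ.filter (fun i : Fin n => ws i = w)).card = 0)

end FanoPolygon

end FanoPaper

/-!
A linear form `c ∈ M` is odd on a Fano polygon if `c(x)` is odd at every boundary lattice point
`x`; the existence of such a form is invariant under mutation. Let `Q = mut_w(P, F)` with
`F = conv{0, v}`. A functional `l` with `l(v) < 0` exposes the same face of `P` and of `Q`, one with
`l(v) > 0` exposes faces related by the shear `x ↦ x + w(x)v`, and one with `l(v) = 0` has the same
range on both. So every boundary lattice point of `Q` differs from one of `P` by a multiple of `v`,
and `c(v)` is even because the edge of `P` with normal `w` carries two lattice points differing by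
`v`. All of this is symmetric in `P` and `Q`, and `GL₂(ℤ)` transports forms. Finally `x₁ + x₂` is
odd on the boundary of the square of `ℙ¹ × ℙ¹`, whose only even lattice point is the origin,
whereas for `𝔽₁` the values of `c` at `(1,0)`, `(0,1)` and `(-1,-1)` sum to `0`.
-/

open Set

namespace ContinuousLinearMap

variable {E : Type*} [AddCommGroup E] [Module ℝ E] [TopologicalSpace E]
  {l : StrongDual ℝ E} {s t : Set E} {x : E}

theorem forall_convexHull_le {r : ℝ} (h : ∀ y ∈ s, l y ≤ r) : ∀ y ∈ convexHull ℝ s, l y ≤ r :=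
  fun _ hy => convexHull_min h (convex_halfSpace_le l.toLinearMap.isLinear r) hy

theorem toExposed_convexHull_subset (l : StrongDual ℝ E) (s : Set E) :
    l.toExposed (convexHull ℝ s) ⊆ convexHull ℝ (l.toExposed s) := by
  rintro x ⟨hx, hmax⟩
  -- `C` is convex and contains `s`, hence `x`, which is not strictly below its own level.
  let C := {y ∈ convexHull ℝ s | l y < l x} ∪ convexHull ℝ (l.toExposed s)
  have hFs : convexHull ℝ (l.toExposed s) ⊆ convexHull ℝ s :=
    convexHull_mono fun y hy => hy.1
  have hsC : s ⊆ C := fun y hy => by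
    rcases (hmax y (subset_convexHull ℝ s hy)).lt_or_eq with hlt | heq
    · exact Or.inl ⟨subset_convexHull ℝ s hy, hlt⟩
    · exact Or.inr (subset_convexHull ℝ _
        ⟨hy, fun z hz => heq ▸ hmax z (subset_convexHull ℝ s hz)⟩)
  have hC : Convex ℝ C := by
    have lower : ∀ y ∈ {y ∈ convexHull ℝ s | l y < l x}, ∀ z ∈ convexHull ℝ s,
        ∀ a b : ℝ, 0 < a → 0 ≤ b → a + b = 1 → a • y + b • z ∈ C := by
      rintro y ⟨hy, hly⟩ z hz a b ha hb hab
      refine Or.inl ⟨convex_convexHull ℝ s hy hz ha.le hb hab, ?_⟩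
      have hlz := hmax z hz
      simp only [map_add, map_smul, smul_eq_mul]
      have hsplit : l x = a * l x + b * l x := by rw [← add_mul, hab, one_mul]
      nlinarith [mul_lt_mul_of_pos_left hly ha, mul_le_mul_of_nonneg_left hlz hb]
    rintro y hy z hz a b ha hb hab
    have hzs : z ∈ convexHull ℝ s := hz.elim (·.1) (hFs ·)
    rcases hy with hy | hy
    · rcases ha.lt_or_eq with ha | rfl
      · exact lower y hy z hzs a b ha hb hab
      · obtain rfl : b = 1 := by linarith
        rwa [zero_smul, one_smul, zero_add]
    rcases hz with hz | hz
    · rcases hb.lt_or_eq with hb | rfl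
      · rw [add_comm]; exact lower z hz y (hFs hy) b a hb ha (by linarith)
      · obtain rfl : a = 1 := by linarith
        rw [one_smul, zero_smul, add_zero]; exact Or.inr hy
    · exact Or.inr (convex_convexHull ℝ _ hy hz ha hb hab)
  rcases convexHull_min hsC hC hx with h | h
  · exact absurd h.2 (lt_irrefl _)
  · exact h

theorem toExposed_convexHull_subset_of_forall
    (hs : ∀ y ∈ s, ∃ p ∈ convexHull ℝ t, l y ≤ l p ∧ (l p ≤ l y → y ∈ convexHull ℝ t))
    (ht : ∀ y ∈ t, ∃ q ∈ convexHull ℝ s, l y ≤ l q) :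
    l.toExposed (convexHull ℝ s) ⊆ l.toExposed (convexHull ℝ t) := by
  rintro x ⟨hx, hmax⟩
  have hbound : ∀ y ∈ convexHull ℝ t, l y ≤ l x :=
    forall_convexHull_le fun y hy =>
      let ⟨q, hq, hyq⟩ := ht y hy
      hyq.trans (hmax q hq)
  refine ⟨convexHull_min ?_ (convex_convexHull ℝ t) (toExposed_convexHull_subset l s ⟨hx, hmax⟩),
    hbound⟩
  rintro y ⟨hy, hymax⟩
  obtain ⟨p, hp, -, hpy⟩ := hs y hy
  exact hpy ((hbound p hp).trans (forall_convexHull_le hymax x hx))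

theorem toExposed_convexHull_eq_of_forall
    (hs : ∀ y ∈ s, ∃ p ∈ convexHull ℝ t, l y ≤ l p ∧ (l p ≤ l y → y ∈ convexHull ℝ t))
    (ht : ∀ y ∈ t, ∃ q ∈ convexHull ℝ s, l y ≤ l q ∧ (l q ≤ l y → y ∈ convexHull ℝ s)) :
    l.toExposed (convexHull ℝ s) = l.toExposed (convexHull ℝ t) :=
  (toExposed_convexHull_subset_of_forall hs fun y hy =>
      let ⟨q, hq, hyq, _⟩ := ht y hy; ⟨q, hq, hyq⟩).antisymm
    (toExposed_convexHull_subset_of_forall ht fun y hy =>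
      let ⟨p, hp, hyp, _⟩ := hs y hy; ⟨p, hp, hyp⟩)

theorem toExposed_image (l : StrongDual ℝ E) (L : E ≃L[ℝ] E) (A : Set E) :
    l.toExposed (L '' A) = L '' (l ∘L (L : E →L[ℝ] E)).toExposed A := by
  ext x
  simp only [toExposed, mem_ofPred_eq, mem_image, forall_exists_index, and_imp,
    forall_apply_eq_imp_iff₂, comp_apply, ContinuousLinearEquiv.coe_coe]
  constructor
  · rintro ⟨⟨a, ha, rfl⟩, hmax⟩
    exact ⟨a, ⟨ha, hmax⟩, rfl⟩
  · rintro ⟨a, ⟨ha, hmax⟩, rfl⟩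
    exact ⟨⟨a, ha, rfl⟩, hmax⟩

theorem image_convexHull_subset_of_forall
    (h : ∀ y ∈ s, ∃ p ∈ convexHull ℝ t, l y = l p) :
    l '' convexHull ℝ s ⊆ l '' convexHull ℝ t := by
  have hconv : Convex ℝ (l '' convexHull ℝ t) :=
    (convex_convexHull ℝ t).linear_image l.toLinearMap
  rw [show (l : E → ℝ) = l.toLinearMap from rfl, l.toLinearMap.image_convexHull]
  exact convexHull_min (fun _ ⟨y, hy, hly⟩ => let ⟨p, hp, hyp⟩ := h y hy; ⟨p, hp, hyp ▸ hly⟩)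
    hconv

theorem comp_equiv_ne_zero (hl : l ≠ 0) (L : E ≃L[ℝ] E) : l ∘L (L : E →L[ℝ] E) ≠ 0 := fun h =>
  hl <| ext fun x => by simpa using congrArg (fun l' : StrongDual ℝ E => l' (L.symm x)) h

end ContinuousLinearMap

section MutationHull

variable {E : Type*} [AddCommGroup E] [Module ℝ E] [TopologicalSpace E]

/-- The convex-geometric shape of a mutation: `convexHull ℝ S` is the polygon and
`convexHull ℝ X` its mutation with respect to `w` with factor `conv{0, v}`. -/
structure IsMutationHull (S X : Set E) (w : StrongDual ℝ E) (v : E) : Prop where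
  mem_or_exists : ∀ y ∈ X, (y ∈ convexHull ℝ S ∧ y - w y • v ∈ convexHull ℝ S) ∨
    ∃ p ∈ convexHull ℝ S, ∃ s : ℝ, 0 ≤ s ∧ s ≤ w p ∧ y = p + s • v
  exists_sub_smul_mem : ∀ V ∈ S, ∃ s : ℝ, 0 ≤ s ∧ s ≤ max 0 (-w V) ∧ V - s • v ∈ convexHull ℝ X
  add_smul_mem : ∀ V ∈ S, 0 ≤ w V → V + w V • v ∈ convexHull ℝ X

namespace IsMutationHull

variable {S X : Set E} {w l : StrongDual ℝ E} {v : E}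

theorem toExposed_eq_of_neg (h : IsMutationHull S X w v) (hl : l v < 0) :
    l.toExposed (convexHull ℝ X) = l.toExposed (convexHull ℝ S) := by
  refine ContinuousLinearMap.toExposed_convexHull_eq_of_forall (fun y hy => ?_) fun V hV => ?_
  · rcases h.mem_or_exists y hy with ⟨hyS, -⟩ | ⟨p, hp, s, hs, -, rfl⟩
    · exact ⟨y, hyS, le_rfl, fun _ => hyS⟩
    · refine ⟨p, hp, ?_, fun hle => ?_⟩
      · simp only [map_add, map_smul, smul_eq_mul]; nlinarith
      · obtain rfl : s = 0 := by
          simp only [map_add, map_smul, smul_eq_mul] at hle; nlinarith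
        simpa using hp
  · obtain ⟨s, hs, -, hmem⟩ := h.exists_sub_smul_mem V hV
    refine ⟨V - s • v, hmem, ?_, fun hle => ?_⟩
    · simp only [map_sub, map_smul, smul_eq_mul]; nlinarith
    · obtain rfl : s = 0 := by
        simp only [map_sub, map_smul, smul_eq_mul] at hle; nlinarith
      simpa using hmem

theorem toExposed_eq_of_pos (h : IsMutationHull S X w v) (hwv : w v = 0) (hl : 0 < l v)
    (φ : E →ₗ[ℝ] E) (hφ : ∀ y, φ y = y + w y • v) :
    l.toExposed (convexHull ℝ X) = l.toExposed (φ '' convexHull ℝ S) := by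
  rw [φ.image_convexHull]
  refine ContinuousLinearMap.toExposed_convexHull_eq_of_forall (fun y hy => ?_) ?_
  · rw [← φ.image_convexHull]
    rcases h.mem_or_exists y hy with ⟨-, hyS⟩ | ⟨p, hp, s, hs, hsp, rfl⟩
    · have hy : y ∈ φ '' convexHull ℝ S := ⟨_, hyS, by simp [hφ, hwv]⟩
      exact ⟨y, hy, le_rfl, fun _ => hy⟩
    · refine ⟨φ p, mem_image_of_mem φ hp, ?_, fun hle => ?_⟩
      · simp only [hφ, map_add, map_smul, smul_eq_mul]; nlinarith
      · obtain rfl : s = w p := by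
          simp only [hφ, map_add, map_smul, smul_eq_mul] at hle; nlinarith
        exact ⟨p, hp, hφ p⟩
  · rintro _ ⟨V, hV, rfl⟩
    rcases le_or_gt 0 (w V) with hV0 | hV0
    · exact ⟨φ V, hφ V ▸ h.add_smul_mem V hV hV0, le_rfl, fun _ => hφ V ▸ h.add_smul_mem V hV hV0⟩
    obtain ⟨s, hs, hsV, hmem⟩ := h.exists_sub_smul_mem V hV
    rw [max_eq_right (by linarith)] at hsV
    refine ⟨V - s • v, hmem, ?_, fun hle => ?_⟩
    · simp only [hφ, map_add, map_sub, map_smul, smul_eq_mul]; nlinarith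
    · obtain rfl : s = -w V := by
        simp only [hφ, map_add, map_sub, map_smul, smul_eq_mul] at hle; nlinarith
      rwa [hφ, ← sub_neg_eq_add, ← neg_smul]

theorem image_eq_of_apply_eq_zero (h : IsMutationHull S X w v) (hl : l v = 0) :
    l '' convexHull ℝ X = l '' convexHull ℝ S := by
  refine (ContinuousLinearMap.image_convexHull_subset_of_forall fun y hy => ?_).antisymm
    (ContinuousLinearMap.image_convexHull_subset_of_forall fun V hV => ?_)
  · rcases h.mem_or_exists y hy with ⟨hyS, -⟩ | ⟨p, hp, s, -, -, rfl⟩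
    · exact ⟨y, hyS, rfl⟩
    · exact ⟨p, hp, by simp [hl]⟩
  · obtain ⟨s, -, -, hmem⟩ := h.exists_sub_smul_mem V hV
    exact ⟨_, hmem, by simp [hl]⟩

end IsMutationHull

end MutationHull

namespace FanoPaper

theorem Primitive.ne_zero {v : NZ} (hv : Primitive v) : v ≠ 0 := by
  rintro rfl
  exact not_isCoprime_zero_zero hv

theorem Primitive.exists_eq_zsmul_of_wedge_eq_zero {v y : NZ} (hv : Primitive v)
    (h : wedge v y = 0) : ∃ j : ℤ, y = j • v := by
  obtain ⟨a, b, hab⟩ := hv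
  refine ⟨a * y.1 + b * y.2, Prod.ext ?_ ?_⟩ <;> simp only [wedge, Prod.smul_fst,
    Prod.smul_snd, smul_eq_mul] at h ⊢
  · linear_combination (-y.1) * hab - b * h
  · linear_combination (-y.2) * hab + a * h

theorem Primitive.wedge_eq_zero_of_dotZ_eq_zero {w v y : NZ} (hw : Primitive w)
    (hv : dotZ w v = 0) (hy : dotZ w y = 0) : wedge v y = 0 := by
  obtain ⟨a, b, hab⟩ := hw
  simp only [dotZ, wedge] at *
  linear_combination (-(v.1 * y.2 - v.2 * y.1)) * hab + (a * y.2 - b * y.1) * hv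
    + (b * v.1 - a * v.2) * hy

theorem ιR_add (x y : NZ) : ιR (x + y) = ιR x + ιR y := by
  simp [ιR]

theorem ιR_sub (x y : NZ) : ιR (x - y) = ιR x - ιR y := by
  simp [ιR]

theorem ιR_zsmul (j : ℤ) (x : NZ) : ιR (j • x) = (j : ℝ) • ιR x := by
  simp [ιR]

theorem strongDual_apply_eq (l : StrongDual ℝ (ℝ × ℝ)) (z : ℝ × ℝ) :
    l z = l (1, 0) * z.1 + l (0, 1) * z.2 := by
  conv_lhs => rw [show z = z.1 • ((1 : ℝ), (0 : ℝ)) + z.2 • ((0 : ℝ), (1 : ℝ)) by simp]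
  rw [map_add, map_smul, map_smul, smul_eq_mul, smul_eq_mul, mul_comm, mul_comm z.2]

theorem wedge_eq_zero_of_apply_eq_zero {l : StrongDual ℝ (ℝ × ℝ)} (hl : l ≠ 0) {v y : NZ}
    (hv : l (ιR v) = 0) (hy : l (ιR y) = 0) : wedge v y = 0 := by
  rw [strongDual_apply_eq] at hv hy
  simp only [ιR] at hv hy
  have hwedge : ((wedge v y : ℤ) : ℝ) * l (1, 0) = 0 ∧ ((wedge v y : ℤ) : ℝ) * l (0, 1) = 0 := by
    push_cast [wedge]
    constructor
    · linear_combination (y.2 : ℝ) * hv - (v.2 : ℝ) * hy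
    · linear_combination (v.1 : ℝ) * hy - (y.1 : ℝ) * hv
  by_contra hne
  have hne' : ((wedge v y : ℤ) : ℝ) ≠ 0 := by exact_mod_cast hne
  refine hl (ContinuousLinearMap.ext fun z => ?_)
  rw [strongDual_apply_eq l, (mul_eq_zero.1 hwedge.1).resolve_left hne',
    (mul_eq_zero.1 hwedge.2).resolve_left hne']
  simp

def dotR (w : NZ) : StrongDual ℝ (ℝ × ℝ) :=
  (w.1 : ℝ) • ContinuousLinearMap.fst ℝ ℝ ℝ + (w.2 : ℝ) • ContinuousLinearMap.snd ℝ ℝ ℝ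

theorem dotR_apply (w : NZ) (z : ℝ × ℝ) : dotR w z = w.1 * z.1 + w.2 * z.2 := rfl

@[simp]
theorem dotR_ιR (w x : NZ) : dotR w (ιR x) = dotZ w x := by
  simp [dotR_apply, ιR, dotZ]

theorem dotR_ne_zero {w : NZ} (hw : w ≠ 0) : dotR w ≠ 0 := fun h => hw <| by
  have h1 := congrArg (fun l => l ((1 : ℝ), (0 : ℝ))) h
  have h2 := congrArg (fun l => l ((0 : ℝ), (1 : ℝ))) h
  simp only [dotR_apply] at h1 h2
  ext <;> simp_all

def dotZL (w : NZ) : Module.Dual ℤ NZ :=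
  w.1 • LinearMap.fst ℤ ℤ ℤ + w.2 • LinearMap.snd ℤ ℤ ℤ

@[simp]
theorem dotZL_apply (w x : NZ) : dotZL w x = dotZ w x := rfl

theorem dotZ_add (w x y : NZ) : dotZ w (x + y) = dotZ w x + dotZ w y := map_add (dotZL w) x y

theorem dotZ_sub (w x y : NZ) : dotZ w (x - y) = dotZ w x - dotZ w y := map_sub (dotZL w) x y

theorem dotZ_zsmul (w x : NZ) (j : ℤ) : dotZ w (j • x) = j * dotZ w x := map_zsmul (dotZL w) j x

def realify (f : NZ →ₗ[ℤ] NZ) : (ℝ × ℝ) →ₗ[ℝ] ℝ × ℝ :=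
  (LinearMap.fst ℝ ℝ ℝ).smulRight (ιR (f (1, 0))) + (LinearMap.snd ℝ ℝ ℝ).smulRight (ιR (f (0, 1)))

@[simp]
theorem realify_ιR (f : NZ →ₗ[ℤ] NZ) (x : NZ) : realify f (ιR x) = ιR (f x) := by
  have hx : f x = x.1 • f (1, 0) + x.2 • f (0, 1) := by
    rw [← map_zsmul, ← map_zsmul, ← map_add]
    congr 1
    ext <;> simp
  simp [realify, hx, ιR]

theorem realify_comp (f g : NZ →ₗ[ℤ] NZ) : realify (f ∘ₗ g) = realify f ∘ₗ realify g := by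
  have e₁ : ((1 : ℝ), (0 : ℝ)) = ιR (1, 0) := by simp [ιR]
  have e₂ : ((0 : ℝ), (1 : ℝ)) = ιR (0, 1) := by simp [ιR]
  refine LinearMap.prod_ext (LinearMap.ext_ring ?_) (LinearMap.ext_ring ?_) <;>
    simp [e₁, e₂]

theorem realify_id : realify LinearMap.id = LinearMap.id := by
  refine LinearMap.prod_ext (LinearMap.ext_ring ?_) (LinearMap.ext_ring ?_) <;> simp [realify, ιR]

noncomputable def realifyEquiv (f : NZ ≃ₗ[ℤ] NZ) : (ℝ × ℝ) ≃L[ℝ] ℝ × ℝ :=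
  (LinearEquiv.ofLinearMap (realify f) (realify f.symm)
    (by rw [← realify_comp, LinearEquiv.comp_coe, f.symm_trans_self]; exact realify_id)
    (by rw [← realify_comp, LinearEquiv.comp_coe, f.self_trans_symm]; exact realify_id)
    ).toContinuousLinearEquiv

@[simp]
theorem realifyEquiv_ιR (f : NZ ≃ₗ[ℤ] NZ) (x : NZ) : realifyEquiv f (ιR x) = ιR (f x) :=
  realify_ιR f x

@[simp]
theorem realifyEquiv_symm_ιR (f : NZ ≃ₗ[ℤ] NZ) (x : NZ) :
    (realifyEquiv f).symm (ιR x) = ιR (f.symm x) := by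
  rw [ContinuousLinearEquiv.symm_apply_eq, realifyEquiv_ιR, f.apply_symm_apply]

noncomputable def toReal2 : NQ →ₗ[ℚ] ℝ × ℝ :=
  (Algebra.linearMap ℚ ℝ).prodMap (Algebra.linearMap ℚ ℝ)

theorem toReal2_apply (p : NQ) : toReal2 p = ((p.1 : ℝ), (p.2 : ℝ)) := rfl

@[simp]
theorem toReal2_ι (x : NZ) : toReal2 (ι x) = ιR x := by
  simp [toReal2_apply, ι, ιR]

theorem toReal2_add_smul_ι (p : NQ) (s : ℚ) (x : NZ) :
    toReal2 (p + s • ι x) = toReal2 p + (s : ℝ) • ιR x := by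
  ext <;> simp [toReal2_apply, ι, ιR]

theorem convexHull_image_toReal2_convexHull (A : Set NQ) :
    convexHull ℝ (toReal2 '' convexHull ℚ A) = convexHull ℝ (toReal2 '' A) := by
  refine (convexHull_min ?_ (convex_convexHull ℝ _)).antisymm
    (convexHull_mono (image_mono (subset_convexHull ℚ A)))
  rw [toReal2.image_convexHull]
  exact convexHull_min (subset_convexHull ℝ _) ((convex_convexHull ℝ _).lift ℚ)

theorem exists_eq_smul_of_mem_smul_factor {v : NZ} {t : ℚ} (ht : 0 ≤ t) {f : NQ}
    (hf : f ∈ t • factor v) : ∃ s : ℚ, 0 ≤ s ∧ s ≤ t ∧ f = s • ι v := by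
  obtain ⟨f, hf, rfl⟩ := hf
  rw [factor, convexHull_pair] at hf
  obtain ⟨a, b, ha, hb, hab, rfl⟩ := hf
  exact ⟨t * b, by positivity, by nlinarith, by simp [smul_smul]⟩

theorem zero_mem_smul_factor (v : NZ) (t : ℚ) : (0 : NQ) ∈ t • factor v :=
  ⟨0, subset_convexHull ℚ _ (by simp), smul_zero t⟩

theorem smul_ι_mem_smul_factor (v : NZ) (t : ℚ) : t • ι v ∈ t • factor v :=
  smul_mem_smul_set (subset_convexHull ℚ _ (by simp))

namespace FanoPolygon

variable (P : FanoPolygon)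

theorem hullR_eq_convexHull_image_hull : P.hullR = convexHull ℝ (toReal2 '' P.hull) := by
  simp only [hull, convexHull_image_toReal2_convexHull, image_image, toReal2_ι]
  rfl

theorem hullR_eq_of_hull_eq {A : Set NQ} (h : P.hull = convexHull ℚ A) :
    P.hullR = convexHull ℝ (toReal2 '' A) := by
  rw [hullR_eq_convexHull_image_hull, h, convexHull_image_toReal2_convexHull]

variable {P}

theorem toReal2_mem_hullR {p : NQ} (hp : p ∈ P.hull) : toReal2 p ∈ P.hullR := by
  rw [hullR_eq_convexHull_image_hull]
  exact subset_convexHull ℝ _ (mem_image_of_mem _ hp)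

theorem ιR_mem_hullR {V : NZ} (hV : V ∈ P.verts) : ιR V ∈ P.hullR :=
  subset_convexHull ℝ _ (mem_image_of_mem _ hV)

theorem ι_mem_hull {V : NZ} (hV : V ∈ P.verts) : ι V ∈ P.hull :=
  subset_convexHull ℚ _ (mem_image_of_mem _ hV)

theorem forall_hullR_le {l : StrongDual ℝ (ℝ × ℝ)} {r : ℝ} (h : ∀ V ∈ P.verts, l (ιR V) ≤ r) :
    ∀ y ∈ P.hullR, l y ≤ r :=
  l.forall_convexHull_le (by rintro _ ⟨V, hV, rfl⟩; exact h V hV)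

theorem ιR_mem_toExposed {l : StrongDual ℝ (ℝ × ℝ)} {V : NZ} (hV : V ∈ P.verts)
    (h : ∀ W ∈ P.verts, l (ιR W) ≤ l (ιR V)) : ιR V ∈ l.toExposed P.hullR :=
  ⟨P.ιR_mem_hullR hV, P.forall_hullR_le h⟩

theorem exists_mem_toExposed (P : FanoPolygon) (l : StrongDual ℝ (ℝ × ℝ)) :
    ∃ V ∈ P.verts, ιR V ∈ l.toExposed P.hullR := by
  obtain ⟨V, hV, hmax⟩ := P.verts.exists_max_image (fun V => l (ιR V)) P.verts_nonempty
  exact ⟨V, hV, P.ιR_mem_toExposed hV hmax⟩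

theorem hMin_le (w : NZ) {y : ℝ × ℝ} (hy : y ∈ P.hullR) : (P.hMin w : ℝ) ≤ dotR w y := by
  have := P.forall_hullR_le (l := -dotR w) (r := -P.hMin w) (fun V hV => by
    rw [neg_apply, dotR_ιR, neg_le_neg_iff]
    exact_mod_cast Finset.inf'_le (dotZ w) hV) y hy
  rw [neg_apply] at this
  linarith

theorem le_hMax (w : NZ) {y : ℝ × ℝ} (hy : y ∈ P.hullR) : dotR w y ≤ P.hMax w :=
  P.forall_hullR_le (fun V hV => by rw [dotR_ιR]; exact_mod_cast Finset.le_sup' (dotZ w) hV) y hy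

theorem hMax_pos {w : NZ} (hw : Primitive w) : 0 < P.hMax w := by
  have hT : Filter.Tendsto (fun t : ℚ => t • ι w) (nhdsWithin 0 (Ioi 0)) (nhds 0) := by
    have hc : Continuous fun t : ℚ => t • ι w := continuous_id.smul continuous_const
    simpa using (hc.tendsto 0).mono_left nhdsWithin_le_nhds
  obtain ⟨t, ht, htpos⟩ := ((hT.eventually (mem_interior_iff_mem_nhds.1 P.zero_mem_interior)).and
    self_mem_nhdsWithin).exists
  have hle := P.le_hMax w (toReal2_mem_hullR ht)
  have hpos : (0 : ℝ) < dotR w (toReal2 (t • ι w)) := by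
    have htR : (0 : ℝ) < t := by exact_mod_cast htpos
    have hw2 : (0 : ℝ) < (w.1 : ℝ) ^ 2 + (w.2 : ℝ) ^ 2 := by
      obtain ⟨a, b, hab⟩ := hw
      have habR : (a : ℝ) * w.1 + b * w.2 = 1 := by exact_mod_cast hab
      nlinarith [sq_nonneg ((a : ℝ) * w.2 - b * w.1), sq_nonneg (a : ℝ), sq_nonneg (b : ℝ)]
    simp only [dotR_apply, toReal2_apply, ι, Prod.smul_fst, Prod.smul_snd, smul_eq_mul]
    push_cast
    nlinarith
  exact_mod_cast hpos.trans_le hle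

theorem slice_subset_hull {w : NZ} {h : ℤ} : P.slice w h ⊆ P.hull :=
  convexHull_min (by rintro _ ⟨x, ⟨hx, -⟩, rfl⟩; exact hx) (convex_convexHull ℚ _)

theorem dotR_toReal2_of_mem_slice {w : NZ} {h : ℤ} {p : NQ} (hp : p ∈ P.slice w h) :
    dotR w (toReal2 p) = h :=
  convexHull_min (t := toReal2 ⁻¹' {y | dotR w y = h}) (by rintro _ ⟨x, ⟨-, hx⟩, rfl⟩; simp [hx])
    (((convex_hyperplane (dotR w).toLinearMap.isLinear _).lift ℚ).linear_preimage toReal2) hp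

theorem ι_mem_slice {w V : NZ} (hV : V ∈ P.verts) : ι V ∈ P.slice w (dotZ w V) :=
  subset_convexHull ℚ _ ⟨V, ⟨ι_mem_hull hV, rfl⟩, rfl⟩

end FanoPolygon

/-- `mutSet P w v G` is the convex hull of this set. -/
def mutGen (P : FanoPolygon) (w v : NZ) (G : ℤ → Set NQ) : Set NQ :=
  (⋃ h ∈ Finset.Icc (P.hMin w) (-1 : ℤ), G h) ∪
    ⋃ h ∈ Finset.Icc (0 : ℤ) (P.hMax w), (P.slice w h + ((h : ℚ) • factor v))

section Mutation

variable {P : FanoPolygon} {w v : NZ} {G : ℤ → Set NQ} {h : ℤ} {y : NQ}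

theorem mem_mutGen_of_mem (hh₁ : P.hMin w ≤ h) (hh₂ : h ≤ -1) (hy : y ∈ G h) :
    y ∈ mutGen P w v G :=
  Or.inl <| mem_iUnion₂.2 ⟨h, Finset.mem_Icc.2 ⟨hh₁, hh₂⟩, hy⟩

theorem mem_mutGen_of_mem_add (hh₁ : 0 ≤ h) (hh₂ : h ≤ P.hMax w)
    (hy : y ∈ P.slice w h + (h : ℚ) • factor v) : y ∈ mutGen P w v G :=
  Or.inr <| mem_iUnion₂.2 ⟨h, Finset.mem_Icc.2 ⟨hh₁, hh₂⟩, hy⟩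

theorem MutationData.toReal2_mem_hullR_of_mem (hG : MutationData P w v G) (hh₁ : P.hMin w ≤ h)
    (hh₂ : h ≤ -1) (hy : y ∈ G h) :
    toReal2 y ∈ P.hullR ∧ toReal2 y - dotR w (toReal2 y) • ιR v ∈ P.hullR := by
  have hsub := (hG h hh₁ hh₂).2.2
  have hy₀ : y ∈ P.slice w h := by simpa using hsub (add_mem_add hy (zero_mem_smul_factor v _))
  have hy₁ : y + (|h| : ℚ) • ι v ∈ P.slice w h :=
    hsub (add_mem_add hy (smul_ι_mem_smul_factor v _))
  have hshift : toReal2 y - dotR w (toReal2 y) • ιR v = toReal2 (y + (|h| : ℚ) • ι v) := by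
    rw [toReal2_add_smul_ι, P.dotR_toReal2_of_mem_slice hy₀,
      abs_of_neg (Int.cast_lt_zero.2 (by omega))]
    push_cast
    rw [neg_smul, sub_eq_add_neg]
  rw [hshift]
  exact ⟨P.toReal2_mem_hullR (P.slice_subset_hull hy₀),
    P.toReal2_mem_hullR (P.slice_subset_hull hy₁)⟩

theorem FanoPolygon.exists_of_mem_slice_add (hh : 0 ≤ h)
    (hy : y ∈ P.slice w h + (h : ℚ) • factor v) :
    ∃ p ∈ P.hullR, ∃ s : ℝ, 0 ≤ s ∧ s ≤ dotR w p ∧ toReal2 y = p + s • ιR v := by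
  obtain ⟨p, hp, f, hf, rfl⟩ := hy
  obtain ⟨s, hs₀, hs, rfl⟩ := exists_eq_smul_of_mem_smul_factor (by exact_mod_cast hh) hf
  refine ⟨toReal2 p, P.toReal2_mem_hullR (P.slice_subset_hull hp), s, by exact_mod_cast hs₀, ?_,
    toReal2_add_smul_ι p s v⟩
  rw [P.dotR_toReal2_of_mem_slice hp]
  exact_mod_cast hs

theorem MutationData.exists_sub_smul_mem (hG : MutationData P w v G) {V : NZ}
    (hV : V ∈ P.verts) : ∃ s : ℝ, 0 ≤ s ∧ s ≤ max 0 (-(dotZ w V : ℝ)) ∧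
      ιR V - s • ιR v ∈ convexHull ℝ (toReal2 '' mutGen P w v G) := by
  rcases le_or_gt 0 (dotZ w V) with hV₀ | hV₀
  · have hmem : ι V ∈ mutGen P w v G := mem_mutGen_of_mem_add hV₀ (Finset.le_sup' (dotZ w) hV)
      (by simpa using add_mem_add (P.ι_mem_slice hV) (zero_mem_smul_factor v _))
    exact ⟨0, le_rfl, le_max_left _ _,
      by simpa using subset_convexHull ℝ _ (mem_image_of_mem toReal2 hmem)⟩
  have hmin : P.hMin w ≤ dotZ w V := Finset.inf'_le (dotZ w) hV
  obtain ⟨g, hg, f, hf, hgf⟩ := (hG (dotZ w V) hmin (by omega)).2.1 (mem_image_of_mem ι ⟨hV, rfl⟩)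
  obtain ⟨s, hs₀, hs, rfl⟩ := exists_eq_smul_of_mem_smul_factor (abs_nonneg _) hf
  refine ⟨s, by exact_mod_cast hs₀, ?_, ?_⟩
  · rw [abs_of_neg (by exact_mod_cast hV₀)] at hs
    exact le_max_of_le_right (by exact_mod_cast hs)
  · rw [← toReal2_ι, ← hgf, toReal2_add_smul_ι, add_sub_cancel_right]
    exact subset_convexHull ℝ _ (mem_image_of_mem toReal2 (mem_mutGen_of_mem hmin (by omega) hg))

theorem MutationData.isMutationHull (hG : MutationData P w v G) :
    IsMutationHull (ιR '' P.verts) (toReal2 '' mutGen P w v G) (dotR w) (ιR v) where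
  mem_or_exists := by
    rintro _ ⟨y, hy | hy, rfl⟩ <;> simp only [mem_iUnion₂, Finset.mem_Icc] at hy <;>
      obtain ⟨h, ⟨hh₁, hh₂⟩, hy⟩ := hy
    · exact Or.inl (hG.toReal2_mem_hullR_of_mem hh₁ hh₂ hy)
    · exact Or.inr (P.exists_of_mem_slice_add hh₁ hy)
  exists_sub_smul_mem := by
    rintro _ ⟨V, hV, rfl⟩
    simpa using hG.exists_sub_smul_mem hV
  add_smul_mem := by
    rintro _ ⟨V, hV, rfl⟩ hV₀
    rw [dotR_ιR] at hV₀ ⊢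
    have hmem : ι V + (dotZ w V : ℚ) • ι v ∈ mutGen P w v G :=
      mem_mutGen_of_mem_add (by exact_mod_cast hV₀) (Finset.le_sup' (dotZ w) hV)
        (add_mem_add (P.ι_mem_slice hV) (smul_ι_mem_smul_factor v _))
    simpa [toReal2_add_smul_ι] using subset_convexHull ℝ _ (mem_image_of_mem toReal2 hmem)

end Mutation

def shear {w v : NZ} (h : dotZ w v = 0) : NZ ≃ₗ[ℤ] NZ :=
  LinearEquiv.transvection (f := dotZL w) h

theorem shear_apply {w v : NZ} (h : dotZ w v = 0) (x : NZ) : shear h x = x + dotZ w x • v := rfl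

theorem shear_symm_apply {w v : NZ} (h : dotZ w v = 0) (x : NZ) :
    (shear h).symm x = x + (-dotZ w x) • v := by
  have hw : dotZ w (x + (-dotZ w x) • v) = dotZ w x := by
    rw [dotZ_add, dotZ_zsmul, h, mul_zero, add_zero]
  rw [LinearEquiv.symm_apply_eq, shear_apply, hw, add_assoc, ← add_smul, neg_add_cancel,
    zero_smul, add_zero]

theorem realifyEquiv_shear_apply {w v : NZ} (h : dotZ w v = 0) (y : ℝ × ℝ) :
    realifyEquiv (shear h) y = y + dotR w y • ιR v := by
  ext <;> simp [realifyEquiv, realify, shear_apply, dotR_apply, ιR, dotZ] <;> ring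

/-- What the parity argument uses of a mutation `Q` of `P` with factor `conv{0, v}`, `L` being
the real shear. Unlike `IsMutation`, it is symmetric in `P` and `Q`. -/
structure FaceCorrespondence (P Q : FanoPolygon) (v : NZ) (L : (ℝ × ℝ) ≃L[ℝ] ℝ × ℝ) : Prop where
  primitive : Primitive v
  apply_v : L (ιR v) = ιR v
  map_lattice : ∀ x : NZ, ∃ j : ℤ, L (ιR x) = ιR (x + j • v)
  symm_map_lattice : ∀ x : NZ, ∃ j : ℤ, L.symm (ιR x) = ιR (x + j • v)
  toExposed_of_neg : ∀ l : StrongDual ℝ (ℝ × ℝ), l (ιR v) < 0 →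
    l.toExposed Q.hullR = l.toExposed P.hullR
  toExposed_of_pos : ∀ l : StrongDual ℝ (ℝ × ℝ), 0 < l (ιR v) →
    l.toExposed Q.hullR = L '' (l ∘L (L : (ℝ × ℝ) →L[ℝ] ℝ × ℝ)).toExposed P.hullR
  image_of_eq_zero : ∀ l : StrongDual ℝ (ℝ × ℝ), l (ιR v) = 0 → l '' Q.hullR = l '' P.hullR
  exists_pair_left : ∃ (l : StrongDual ℝ (ℝ × ℝ)) (x : NZ), l ≠ 0 ∧
    ιR x ∈ l.toExposed P.hullR ∧ ιR (x + v) ∈ l.toExposed P.hullR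
  exists_pair_right : ∃ (l : StrongDual ℝ (ℝ × ℝ)) (x : NZ), l ≠ 0 ∧
    ιR x ∈ l.toExposed Q.hullR ∧ ιR (x + v) ∈ l.toExposed Q.hullR

theorem FaceCorrespondence.symm {P Q : FanoPolygon} {v : NZ} {L : (ℝ × ℝ) ≃L[ℝ] ℝ × ℝ}
    (h : FaceCorrespondence P Q v L) : FaceCorrespondence Q P v L.symm where
  primitive := h.primitive
  apply_v := by rw [ContinuousLinearEquiv.symm_apply_eq, h.apply_v]
  map_lattice := h.symm_map_lattice
  symm_map_lattice := by simpa using h.map_lattice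
  toExposed_of_neg l hl := (h.toExposed_of_neg l hl).symm
  toExposed_of_pos l hl := by
    have hv : L.symm (ιR v) = ιR v := by rw [ContinuousLinearEquiv.symm_apply_eq, h.apply_v]
    rw [h.toExposed_of_pos _ (by simpa [hv] using hl), image_image]
    simp [ContinuousLinearMap.comp_assoc]
  image_of_eq_zero l hl := (h.image_of_eq_zero l hl).symm
  exists_pair_left := h.exists_pair_right
  exists_pair_right := h.exists_pair_left

theorem FanoPolygon.exists_pair_of_isEdgeNormal {P : FanoPolygon} {w v : NZ}
    (hw : P.IsEdgeNormal w) (hv : Primitive v) (hwv : dotZ w v = 0) :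
    ∃ x : NZ, ιR x ∈ (-dotR w).toExposed P.hullR ∧ ιR (x + v) ∈ (-dotR w).toExposed P.hullR := by
  have hbottom : ∀ y ∈ P.hullR, dotR w y = P.hMin w → y ∈ (-dotR w).toExposed P.hullR :=
    fun y hy hlev => ⟨hy, fun z hz => by simpa [hlev] using P.hMin_le w hz⟩
  obtain ⟨V₀, hV₀, V₁, hV₁, hne⟩ := Finset.one_lt_card.1 hw.2
  rw [Finset.mem_filter] at hV₀ hV₁
  obtain ⟨j, hj⟩ := hv.exists_eq_zsmul_of_wedge_eq_zero <| hw.1.wedge_eq_zero_of_dotZ_eq_zero hwv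
    (y := V₁ - V₀) (by rw [dotZ_sub, hV₀.2, hV₁.2, sub_self])
  wlog hj₀ : 0 < j generalizing V₀ V₁ j
  · refine this V₁ hV₁ V₀ hV₀ hne.symm (-j) ?_ ?_
    · rw [neg_smul, ← hj, neg_sub]
    · have : j ≠ 0 := by rintro rfl; exact hne (sub_eq_zero.1 (by simpa using hj)).symm
      omega
  have hj₁ : (0 : ℝ) < j := by exact_mod_cast hj₀
  have hmem : ιR (V₀ + v) ∈ P.hullR := by
    have := (convex_convexHull ℝ _).add_smul_sub_mem (P.ιR_mem_hullR hV₀.1) (P.ιR_mem_hullR hV₁.1)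
      (t := (j : ℝ)⁻¹) ⟨by positivity, inv_le_one_of_one_le₀ (by exact_mod_cast hj₀)⟩
    rwa [← ιR_sub, hj, ιR_zsmul, smul_smul, inv_mul_cancel₀ hj₁.ne', one_smul, ← ιR_add] at this
  refine ⟨V₀, hbottom _ (P.ιR_mem_hullR hV₀.1) (by simp [hV₀.2]), hbottom _ hmem ?_⟩
  rw [dotR_ιR, dotZ_add, hV₀.2, hwv, add_zero]

theorem FanoPolygon.exists_pair_of_isMutationHull {P Q : FanoPolygon} {w v : NZ}
    {X : Set (ℝ × ℝ)} (hX : IsMutationHull (ιR '' P.verts) X (dotR w) (ιR v))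
    (hQ : Q.hullR = convexHull ℝ X) (hw : Primitive w) (hwv : dotZ w v = 0) :
    ∃ x : NZ, ιR x ∈ (dotR w).toExposed Q.hullR ∧ ιR (x + v) ∈ (dotR w).toExposed Q.hullR := by
  obtain ⟨V, hV, hVmax⟩ := P.verts.exists_mem_eq_sup' P.verts_nonempty (dotZ w)
  have hVmax : dotZ w V = P.hMax w := hVmax.symm
  have hM := P.hMax_pos hw
  have himage : dotR w '' Q.hullR = dotR w '' P.hullR := by
    rw [hQ]; exact hX.image_eq_of_apply_eq_zero (by simpa using hwv)
  have htop : ∀ y ∈ Q.hullR, dotR w y = P.hMax w → y ∈ (dotR w).toExposed Q.hullR := by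
    refine fun y hy hlev => ⟨hy, fun z hz => ?_⟩
    obtain ⟨p, hp, hpz⟩ : dotR w z ∈ dotR w '' P.hullR := himage ▸ mem_image_of_mem _ hz
    exact hlev ▸ hpz ▸ P.le_hMax w hp
  have hVQ : ιR V ∈ Q.hullR := by
    obtain ⟨s, hs₀, hs, hmem⟩ := hX.exists_sub_smul_mem _ (mem_image_of_mem ιR hV)
    rw [dotR_ιR, hVmax, max_eq_left (by simpa using hM.le)] at hs
    obtain rfl : s = 0 := by linarith
    rw [hQ]; simpa using hmem
  have hVvQ : ιR (V + v) ∈ Q.hullR := by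
    have hMR : (1 : ℝ) ≤ P.hMax w := by exact_mod_cast hM
    have hVtop := hX.add_smul_mem _ (mem_image_of_mem ιR hV)
      (by rw [dotR_ιR, hVmax]; exact_mod_cast hM.le)
    rw [← hQ, dotR_ιR, hVmax] at hVtop
    have := (convex_convexHull ℝ _).add_smul_sub_mem hVQ hVtop
      (t := ((P.hMax w : ℤ) : ℝ)⁻¹) ⟨by positivity, inv_le_one_of_one_le₀ hMR⟩
    rwa [add_sub_cancel_left, smul_smul, inv_mul_cancel₀ (by positivity), one_smul,
      ← ιR_add] at this
  refine ⟨V, htop _ hVQ (by simp [hVmax]), htop _ hVvQ ?_⟩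
  rw [dotR_ιR, dotZ_add, hwv, add_zero, hVmax]

theorem IsMutationWith.faceCorrespondence {P Q : FanoPolygon} {w v : NZ}
    (hmut : IsMutationWith P w v Q) (hw : P.IsEdgeNormal w) (hv : Primitive v)
    (hwv : dotZ w v = 0) :
    FaceCorrespondence P Q v (realifyEquiv (shear hwv)) := by
  obtain ⟨G, hG, hQ⟩ := hmut
  have hX := hG.isMutationHull
  have hQR : Q.hullR = convexHull ℝ (toReal2 '' mutGen P w v G) := Q.hullR_eq_of_hull_eq hQ
  have hwvR : dotR w (ιR v) = 0 := by simpa using hwv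
  obtain ⟨x, hx, hxv⟩ := P.exists_pair_of_isEdgeNormal hw hv hwv
  obtain ⟨y, hy, hyv⟩ := FanoPolygon.exists_pair_of_isMutationHull hX hQR hw.1 hwv
  refine
    { primitive := hv
      apply_v := by simp [shear_apply, hwv]
      map_lattice := fun x => ⟨dotZ w x, by simp [shear_apply]⟩
      symm_map_lattice := fun x => ⟨-dotZ w x, by simp [shear_symm_apply]⟩
      toExposed_of_neg := fun l hl => by rw [hQR]; exact hX.toExposed_eq_of_neg hl
      toExposed_of_pos := fun l hl => by
        rw [hQR, hX.toExposed_eq_of_pos hwvR hl (realifyEquiv (shear hwv)).toLinearEquiv.toLinearMap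
          (realifyEquiv_shear_apply hwv), ← ContinuousLinearMap.toExposed_image]
        rfl
      image_of_eq_zero := fun l hl => by rw [hQR]; exact hX.image_eq_of_apply_eq_zero hl
      exists_pair_left := ⟨_, x, neg_ne_zero.2 (dotR_ne_zero hw.1.ne_zero), hx, hxv⟩
      exists_pair_right := ⟨_, y, dotR_ne_zero hw.1.ne_zero, hy, hyv⟩ }

/-- For a convex body `K`, the lattice points on proper exposed faces are those on the boundary. -/
def IsOddOnFaces (K : Set (ℝ × ℝ)) (c : NZ →ₗ[ℤ] ℤ) : Prop :=
  ∀ l : StrongDual ℝ (ℝ × ℝ), l ≠ 0 → ∀ x : NZ, ιR x ∈ l.toExposed K → Odd (c x)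

def FanoPolygon.HasOddForm (P : FanoPolygon) : Prop :=
  ∃ c : NZ →ₗ[ℤ] ℤ, IsOddOnFaces P.hullR c

theorem FaceCorrespondence.isOddOnFaces {P Q : FanoPolygon} {v : NZ}
    {L : (ℝ × ℝ) ≃L[ℝ] ℝ × ℝ} (h : FaceCorrespondence P Q v L) {c : NZ →ₗ[ℤ] ℤ}
    (hP : IsOddOnFaces P.hullR c) : IsOddOnFaces Q.hullR c := by
  have hcv : Even (c v) := by
    obtain ⟨l, x, hl, hx, hxv⟩ := h.exists_pair_left
    simpa using (hP l hl _ hxv).sub_odd (hP l hl x hx)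
  have hshift : ∀ (x : NZ) (j : ℤ), Odd (c (x + j • v)) → Odd (c x) := fun x j hx => by
    have := hx.sub_even (hcv.mul_left j)
    rwa [map_add, map_zsmul, smul_eq_mul, add_sub_cancel_right] at this
  intro l hl x hx
  rcases lt_trichotomy (l (ιR v)) 0 with hneg | hzero | hpos
  · rw [h.toExposed_of_neg l hneg] at hx
    exact hP l hl x hx
  · obtain ⟨V, -, hV⟩ := P.exists_mem_toExposed l
    have himage := h.image_of_eq_zero l hzero
    obtain ⟨p, hp, hpx⟩ : l (ιR x) ∈ l '' P.hullR := himage ▸ mem_image_of_mem l hx.1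
    obtain ⟨q, hq, hqV⟩ : l (ιR V) ∈ l '' Q.hullR := himage ▸ mem_image_of_mem l hV.1
    have hlevel : l (ιR (x - V)) = 0 := by
      rw [ιR_sub, map_sub, sub_eq_zero]
      exact le_antisymm (hpx ▸ hV.2 p hp) (hqV ▸ hx.2 q hq)
    obtain ⟨j, hj⟩ := h.primitive.exists_eq_zsmul_of_wedge_eq_zero
      (wedge_eq_zero_of_apply_eq_zero hl hzero hlevel)
    have hVx : V = x + (-j) • v := by rw [neg_smul, ← hj]; abel
    exact hshift x (-j) (hVx ▸ hP l hl V hV)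
  · rw [h.toExposed_of_pos l hpos] at hx
    obtain ⟨y, hy, hyx⟩ := hx
    obtain ⟨j, hj⟩ := h.symm_map_lattice x
    rw [← hyx, ContinuousLinearEquiv.symm_apply_apply] at hj
    exact hshift x j (hP _ (ContinuousLinearMap.comp_equiv_ne_zero hl L) _ (hj ▸ hy))

theorem IsOddOnFaces.image_realifyEquiv {K : Set (ℝ × ℝ)} {c : NZ →ₗ[ℤ] ℤ}
    (hK : IsOddOnFaces K c) (f : NZ ≃ₗ[ℤ] NZ) :
    IsOddOnFaces (realifyEquiv f '' K) (c ∘ₗ f.symm.toLinearMap) := by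
  intro l hl x hx
  rw [ContinuousLinearMap.toExposed_image] at hx
  obtain ⟨y, hy, hyx⟩ := hx
  rw [← (realifyEquiv f).symm_apply_eq.2 hyx.symm, realifyEquiv_symm_ιR] at hy
  exact hK _ (ContinuousLinearMap.comp_equiv_ne_zero hl _) _ hy

theorem FanoPolygon.hullR_eq_image_of_verts_eq {P Q : FanoPolygon} {f : NZ ≃ₗ[ℤ] NZ}
    (hQ : Q.verts = P.verts.image f) : Q.hullR = realifyEquiv f '' P.hullR := by
  rw [hullR, hullR, hQ, Finset.coe_image, image_image]
  rw [show (realifyEquiv f : (ℝ × ℝ) → ℝ × ℝ) = (realifyEquiv f).toLinearEquiv.toLinearMap from rfl,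
    LinearMap.image_convexHull, image_image]
  simp

theorem GLEquiv.hasOddForm {P Q : FanoPolygon} (h : GLEquiv P Q) (hP : P.HasOddForm) :
    Q.HasOddForm := by
  obtain ⟨f, hf⟩ := h
  obtain ⟨c, hc⟩ := hP
  exact ⟨_, FanoPolygon.hullR_eq_image_of_verts_eq hf ▸ hc.image_realifyEquiv f⟩

theorem GLEquiv.symm {P Q : FanoPolygon} (h : GLEquiv P Q) : GLEquiv Q P := by
  obtain ⟨f, hf⟩ := h
  exact ⟨f.symm, by rw [hf, Finset.image_image]; simp [Function.comp_def]⟩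

theorem MutEquiv.hasOddForm_iff {P Q : FanoPolygon} (h : MutEquiv P Q) :
    P.HasOddForm ↔ Q.HasOddForm := by
  induction h with
  | rel A B h =>
    rcases h with ⟨w, v, hw, hv, hwv, hmut⟩ | hgl
    · have hface := hmut.faceCorrespondence hw hv hwv
      exact ⟨fun ⟨c, hc⟩ => ⟨c, hface.isOddOnFaces hc⟩,
        fun ⟨c, hc⟩ => ⟨c, hface.symm.isOddOnFaces hc⟩⟩
    · exact ⟨hgl.hasOddForm, hgl.symm.hasOddForm⟩
  | refl => exact Iff.rfl
  | symm _ _ _ ih => exact ih.symm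
  | trans _ _ _ _ _ ih₁ ih₂ => exact ih₁.trans ih₂

theorem hasOddForm_P1xP1 {Q : FanoPolygon}
    (hQ : Q.verts = ({(1,0),(0,1),(-1,0),(0,-1)} : Finset NZ)) : Q.HasOddForm := by
  refine ⟨LinearMap.fst ℤ ℤ ℤ + LinearMap.snd ℤ ℤ ℤ, fun l hl x hx => ?_⟩
  have hbound : ∀ u : NZ, (∀ V ∈ Q.verts, dotZ u V ≤ 1) → dotZ u x ≤ 1 := fun u hu => by
    have := Q.forall_hullR_le (l := dotR u) (r := 1)
      (fun V hV => by rw [dotR_ιR]; exact_mod_cast hu V hV) _ hx.1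
    exact_mod_cast (dotR_ιR u x) ▸ this
  have h₁ := hbound (1, 1) (by simp [hQ, dotZ])
  have h₂ := hbound (1, -1) (by simp [hQ, dotZ])
  have h₃ := hbound (-1, 1) (by simp [hQ, dotZ])
  have h₄ := hbound (-1, -1) (by simp [hQ, dotZ])
  simp only [dotZ] at h₁ h₂ h₃ h₄
  simp only [LinearMap.add_apply, LinearMap.fst_apply, LinearMap.snd_apply]
  by_contra hodd
  -- The only even lattice point of the square is its centre, which lies on no proper face.
  obtain rfl : x = 0 := by
    obtain ⟨k, hk⟩ := Int.not_odd_iff_even.1 hodd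
    ext <;> simp <;> omega
  have hface : ∀ V ∈ Q.verts, l (ιR V) ≤ 0 := fun V hV => by
    have := hx.2 _ (Q.ιR_mem_hullR hV)
    rwa [show ιR 0 = 0 by simp [ιR], map_zero] at this
  have e₁ := hface (1, 0) (by simp [hQ])
  have e₂ := hface (-1, 0) (by simp [hQ])
  have e₃ := hface (0, 1) (by simp [hQ])
  have e₄ := hface (0, -1) (by simp [hQ])
  rw [strongDual_apply_eq] at e₁ e₂ e₃ e₄
  norm_num [ιR] at e₁ e₂ e₃ e₄
  refine hl (ContinuousLinearMap.ext fun z => ?_)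
  rw [strongDual_apply_eq l, show l (1, 0) = 0 by linarith, show l (0, 1) = 0 by linarith]
  simp

theorem not_hasOddForm_F1 {P : FanoPolygon}
    (hP : P.verts = ({(1,0),(0,1),(-1,-1),(0,-1)} : Finset NZ)) : ¬ P.HasOddForm := by
  rintro ⟨c, hc⟩
  have hodd : ∀ u V : NZ, u ≠ 0 → V ∈ P.verts → (∀ W ∈ P.verts, dotZ u W ≤ dotZ u V) →
      Odd (c V) := fun u V hu hV hmax => hc _ (dotR_ne_zero hu) V
    (P.ιR_mem_toExposed hV fun W hW => by simpa using hmax W hW)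
  have h₁ := hodd (1, -1) (1, 0) (by decide) (by simp [hP]) (by simp [hP, dotZ])
  have h₂ := hodd (0, 1) (0, 1) (by decide) (by simp [hP]) (by simp [hP, dotZ])
  have h₃ := hodd (-1, 0) (-1, -1) (by decide) (by simp [hP]) (by simp [hP, dotZ])
  have hsum : c (-1, -1) = -(c (1, 0) + c (0, 1)) := by
    rw [← map_add, ← map_neg]; rfl
  rw [hsum, odd_neg] at h₃
  exact Int.not_even_iff_odd.2 h₃ (h₁.add_odd h₂)

end FanoPaper

open FanoPaper in
/-- The polygons of `𝔽₁` and `ℙ¹ × ℙ¹` are not mutation-equivalent. -/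
theorem F1_not_mutEquiv_P1xP1 (P Q : FanoPolygon)
    (hP : P.verts = ({(1,0),(0,1),(-1,-1),(0,-1)} : Finset NZ))
    (hQ : Q.verts = ({(1,0),(0,1),(-1,0),(0,-1)} : Finset NZ)) :
    ¬ MutEquiv P Q :=
  fun h => not_hasOddForm_F1 hP (h.hasOddForm_iff.2 (hasOddForm_P1xP1 hQ))
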